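/- arXiv:1104.4410 — 4 statements merged into one kernel-verified Lean document; each statement's English description precedes it below -/
import Mathlib

section
/- Let (Ω, F, μ) be a probability space, ε : Ω → ℝ and V : Ω → ℝ^{p} × ℝ^{d} independent random elements, X : Ω → ℝ a square-integrable measurable function of V, m the σ-algebra generated by the second component Z of V, H a closed linear subspace of L²(μ) all of whose elements are (a.e. strongly) m-measurable, and η = P_H(E[X|m]). Let φ : ℝ → ℝ be Borel measurable with φ(ε) square-integrable, and set I_φ = E[φ(ε)²]. Then for every δ ∈ H: E[(φ(ε)(X + δ))²] = I_φ · E[(X + δ)²] ≥ I_φ · E[(X − η)²], and if I_φ > 0 equality holds if and only if δ = −η in L²(μ). -/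
/-!
Since `δ ∈ H` is `σ(Z)`-measurable and `σ(Z) ⊆ σ(V)`, the variables `φ(ε)` and `X + δ` are
independent, so `E[(φ(ε)(X + δ))²] = I_φ · E[(X + δ)²]`. Because `H` lies inside the
`σ(Z)`-measurable part of `L²`, projecting `E[X|Z]` onto `H` is the same as projecting `X` onto
`H`; hence `X - η ⟂ H` and Pythagoras gives `‖X + δ‖² = ‖X - η‖² + ‖η + δ‖²`, whose last term
vanishes exactly when `δ = -η`.
-/

open MeasureTheory ProbabilityTheory

section

variable {Ω : Type*} {F : MeasurableSpace Ω} {μ : Measure Ω}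

theorem ProbabilityTheory.IndepFun.of_measurable_comap {β γ β' γ' : Type*}
    [mβ : MeasurableSpace β] [mγ : MeasurableSpace γ]
    [MeasurableSpace β'] [MeasurableSpace γ'] {f : Ω → β} {g : Ω → γ} {f' : Ω → β'} {g' : Ω → γ'}
    (h : IndepFun f g μ)
    (hf : Measurable[mβ.comap f] f') (hg : Measurable[mγ.comap g] g') : IndepFun f' g' μ := by
  rw [IndepFun_iff_Indep] at h ⊢
  exact indep_of_indep_of_le_right (indep_of_indep_of_le_left h hf.comap_le) hg.comap_le

theorem ProbabilityTheory.IndepFun.integral_mul_sq {A B : Ω → ℝ} (h : IndepFun A B μ)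
    (hA : AEStronglyMeasurable A μ) (hB : AEStronglyMeasurable B μ) :
    ∫ ω, (A ω * B ω) ^ 2 ∂μ = (∫ ω, A ω ^ 2 ∂μ) * ∫ ω, B ω ^ 2 ∂μ := by
  simp_rw [mul_pow]
  exact IndepFun.integral_fun_mul_eq_mul_integral
    (h.comp (measurable_id.pow_const 2) (measurable_id.pow_const 2)) (hA.pow 2) (hB.pow 2)

theorem MeasureTheory.L2.integral_sq_eq_norm_sq_of_ae_eq {f : Lp ℝ 2 μ} {g : Ω → ℝ}
    (h : f =ᵐ[μ] g) : ∫ ω, g ω ^ 2 ∂μ = ‖f‖ ^ 2 := by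
  rw [← real_inner_self_eq_norm_sq, L2.inner_def]
  refine integral_congr_ae ?_
  filter_upwards [h] with ω hω
  simp [hω, sq]

theorem MeasureTheory.MemLp.integral_add_sq_eq_norm_toLp_add_sq {X : Ω → ℝ} (hX : MemLp X 2 μ)
    (f : Lp ℝ 2 μ) : ∫ ω, (X ω + (f : Ω → ℝ) ω) ^ 2 ∂μ = ‖hX.toLp X + f‖ ^ 2 := by
  refine L2.integral_sq_eq_norm_sq_of_ae_eq ?_
  filter_upwards [hX.coeFn_toLp, Lp.coeFn_add (hX.toLp X) f] with ω hX' hXf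
  rw [hXf, Pi.add_apply, hX']

theorem MeasureTheory.MemLp.integral_sub_sq_eq_norm_toLp_sub_sq {X : Ω → ℝ} (hX : MemLp X 2 μ)
    (f : Lp ℝ 2 μ) : ∫ ω, (X ω - (f : Ω → ℝ) ω) ^ 2 ∂μ = ‖hX.toLp X - f‖ ^ 2 := by
  refine L2.integral_sq_eq_norm_sq_of_ae_eq ?_
  filter_upwards [hX.coeFn_toLp, Lp.coeFn_sub (hX.toLp X) f] with ω hX' hXf
  rw [hXf, Pi.sub_apply, hX']

theorem MeasureTheory.orthogonalProjectionOnto_condExpL2 {𝕜 E : Type*} [RCLike 𝕜]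
    [NormedAddCommGroup E] [InnerProductSpace 𝕜 E] [CompleteSpace E] {m : MeasurableSpace Ω}
    (hm : m ≤ F) {H : Submodule 𝕜 (Lp E 2 μ)} [H.HasOrthogonalProjection]
    (hH : ∀ f ∈ H, AEStronglyMeasurable[m] (f : Ω → E) μ) (f : Lp E 2 μ) :
    H.orthogonalProjectionOnto (condExpL2 E 𝕜 hm f : Lp E 2 μ) = H.orthogonalProjectionOnto f :=
  haveI : Fact (m ≤ F) := ⟨hm⟩
  Submodule.orthogonalProjectionOnto_starProjection_of_le
    (fun g hg => mem_lpMeas_iff_aestronglyMeasurable.mpr (hH g hg)) f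

theorem Submodule.norm_add_sq_of_mem {E : Type*} [NormedAddCommGroup E] [InnerProductSpace ℝ E]
    (K : Submodule ℝ E) [K.HasOrthogonalProjection] (x : E) {k : E} (hk : k ∈ K) :
    ‖x + k‖ ^ 2 = ‖x - K.starProjection x‖ ^ 2 + ‖K.starProjection x + k‖ ^ 2 := by
  have horth : inner ℝ (x - K.starProjection x) (K.starProjection x + k) = 0 :=
    K.inner_left_of_mem_orthogonal (K.add_mem (K.starProjection_apply_mem x) hk)
      (K.sub_starProjection_mem_orthogonal x)
  have hsplit : x + k = (x - K.starProjection x) + (K.starProjection x + k) := by abel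
  rw [hsplit, norm_add_sq_real, horth]
  ring

end

theorem stmt2_general {Ω : Type*} {F : MeasurableSpace Ω} (μ : Measure Ω) [IsProbabilityMeasure μ]
    {p d : ℕ}
    (ε : Ω → ℝ) (V : Ω → (Fin p → ℝ) × (Fin d → ℝ))
    (hindep : ProbabilityTheory.IndepFun ε V μ)
    (X : Ω → ℝ) (hX : MemLp X 2 μ)
    (hXV : Measurable[MeasurableSpace.comap V inferInstance] X)
    (m : MeasurableSpace Ω)
    (hmdef : m = MeasurableSpace.comap (fun ω => (V ω).2) inferInstance)
    (hm : m ≤ F)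
    (H : Submodule ℝ (Lp ℝ 2 μ)) [CompleteSpace H]
    (hHmeas : ∀ f : Lp ℝ 2 μ, f ∈ H → AEStronglyMeasurable[m] (f : Ω → ℝ) μ)
    (η : Lp ℝ 2 μ)
    (hη : η = (H.orthogonalProjectionOnto (condExpL2 ℝ ℝ hm (hX.toLp X) : Lp ℝ 2 μ) : Lp ℝ 2 μ))
    (φ : ℝ → ℝ) (hφ : Measurable φ) (hφε : MemLp (fun ω => φ (ε ω)) 2 μ)
    (Iφ : ℝ) (hIφ : Iφ = ∫ ω, φ (ε ω) ^ 2 ∂μ) :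
    ∀ δ : Lp ℝ 2 μ, δ ∈ H →
      (∫ ω, (φ (ε ω) * (X ω + (δ : Ω → ℝ) ω)) ^ 2 ∂μ
          = Iφ * ∫ ω, (X ω + (δ : Ω → ℝ) ω) ^ 2 ∂μ) ∧
      Iφ * ∫ ω, (X ω - (η : Ω → ℝ) ω) ^ 2 ∂μ
        ≤ ∫ ω, (φ (ε ω) * (X ω + (δ : Ω → ℝ) ω)) ^ 2 ∂μ ∧
      (0 < Iφ →
        ((∫ ω, (φ (ε ω) * (X ω + (δ : Ω → ℝ) ω)) ^ 2 ∂μ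
            = Iφ * ∫ ω, (X ω - (η : Ω → ℝ) ω) ^ 2 ∂μ) ↔ δ = -η)) := by
  intro δ hδ
  set Y : Lp ℝ 2 μ := hX.toLp X
  have hmV : m ≤ MeasurableSpace.comap V inferInstance :=
    hmdef ▸ (measurable_snd.comp (comap_measurable V)).comap_le
  have hindepδ : IndepFun (fun ω => φ (ε ω)) (fun ω => X ω + (δ : Ω → ℝ) ω) μ := by
    obtain ⟨δ', hδ'm, hδδ'⟩ := hHmeas δ hδ
    exact (hindep.of_measurable_comap (hφ.comp (comap_measurable ε))
      (hXV.add (hδ'm.measurable.mono hmV le_rfl))).congr .rfl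
      (Filter.EventuallyEq.rfl.add hδδ').symm
  have hfactor : ∫ ω, (φ (ε ω) * (X ω + (δ : Ω → ℝ) ω)) ^ 2 ∂μ
      = Iφ * ∫ ω, (X ω + (δ : Ω → ℝ) ω) ^ 2 ∂μ :=
    hIφ ▸ hindepδ.integral_mul_sq hφε.1 (hX.1.add (Lp.aestronglyMeasurable δ))
  have hηY : η = H.starProjection Y := by
    rw [hη, orthogonalProjectionOnto_condExpL2 hm hHmeas]
    rfl
  have hpyth : ‖Y + δ‖ ^ 2 = ‖Y - η‖ ^ 2 + ‖η + δ‖ ^ 2 := hηY ▸ H.norm_add_sq_of_mem Y hδ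
  have hIφ_nonneg : 0 ≤ Iφ := hIφ ▸ integral_nonneg fun ω => sq_nonneg _
  rw [hfactor, hX.integral_add_sq_eq_norm_toLp_add_sq, hX.integral_sub_sq_eq_norm_toLp_sub_sq,
    hpyth]
  refine ⟨rfl, mul_le_mul_of_nonneg_left (le_add_of_nonneg_right (sq_nonneg _)) hIφ_nonneg,
    fun hpos => ?_⟩
  rw [mul_right_inj' hpos.ne', add_eq_left, sq_eq_zero_iff, norm_eq_zero, add_eq_zero_iff_neg_eq,
    eq_comm]

/-- Fisher information of a parametric submodel in direction `δ`:
`E[(φ(ε)(X + δ))²] = I_φ · E[(X + δ)²] ≥ I_φ · E[(X − η)²]`, where `η = P_H(E[X|m])`,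
with equality (for `I_φ > 0`) iff `δ = −η` in `L²(μ)`. -/
theorem stmt2 {Ω : Type*} {F : MeasurableSpace Ω} (μ : Measure Ω) [IsProbabilityMeasure μ]
    {p d : ℕ}
    (ε : Ω → ℝ) (V : Ω → (Fin p → ℝ) × (Fin d → ℝ))
    (hε : Measurable ε) (hV : Measurable V)
    (hindep : ProbabilityTheory.IndepFun ε V μ)
    (X : Ω → ℝ) (hX : MemLp X 2 μ)
    (hXV : Measurable[MeasurableSpace.comap V inferInstance] X)
    (m : MeasurableSpace Ω)
    (hmdef : m = MeasurableSpace.comap (fun ω => (V ω).2) inferInstance)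
    (hm : m ≤ F)
    (H : Submodule ℝ (Lp ℝ 2 μ)) (hH : IsClosed (H : Set (Lp ℝ 2 μ))) [CompleteSpace H]
    (hHmeas : ∀ f : Lp ℝ 2 μ, f ∈ H → AEStronglyMeasurable[m] (f : Ω → ℝ) μ)
    (η : Lp ℝ 2 μ)
    (hη : η = (H.orthogonalProjectionOnto (condExpL2 ℝ ℝ hm (hX.toLp X) : Lp ℝ 2 μ) : Lp ℝ 2 μ))
    (φ : ℝ → ℝ) (hφ : Measurable φ) (hφε : MemLp (fun ω => φ (ε ω)) 2 μ)
    (Iφ : ℝ) (hIφ : Iφ = ∫ ω, φ (ε ω) ^ 2 ∂μ) :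
    ∀ δ : Lp ℝ 2 μ, δ ∈ H →
      (∫ ω, (φ (ε ω) * (X ω + (δ : Ω → ℝ) ω)) ^ 2 ∂μ
          = Iφ * ∫ ω, (X ω + (δ : Ω → ℝ) ω) ^ 2 ∂μ) ∧
      Iφ * ∫ ω, (X ω - (η : Ω → ℝ) ω) ^ 2 ∂μ
        ≤ ∫ ω, (φ (ε ω) * (X ω + (δ : Ω → ℝ) ω)) ^ 2 ∂μ ∧
      (0 < Iφ →
        ((∫ ω, (φ (ε ω) * (X ω + (δ : Ω → ℝ) ω)) ^ 2 ∂μ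
            = Iφ * ∫ ω, (X ω - (η : Ω → ℝ) ω) ^ 2 ∂μ) ↔ δ = -η)) :=
  stmt2_general μ ε V hindep X hX hXV m hmdef hm H hHmeas η hη φ hφ hφε Iφ hIφ
end

section
/- Let (Ω, F, μ) be a probability space, m ⊆ F a sub-σ-algebra, H a closed linear subspace of L²(μ) all of whose elements are (a.e. strongly) m-measurable, X₁, …, X_p ∈ L²(μ), and η_i = P_H(E[X_i|m]) with P_H the orthogonal projection onto H. Fix c > 0 and define the p×p matrices A with entries A_{ij} = c · ∫ (X_i − η_i)(X_j − η_j) dμ and B with entries B_{ij} = c · ∫ (X_i − E[X_i|m])(X_j − E[X_j|m]) dμ. If B is positive definite, then A is positive definite, B⁻¹ − A⁻¹ is positive semidefinite, and A⁻¹ = B⁻¹ if and only if η_i = E[X_i|m] in L²(μ) (i.e., μ-a.e.) for every i = 1, …, p. -/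
/-!
Write `u = X - E[X|m]` and `w = E[X|m] - η`. Since `η` lies in `H` and so is `m`-measurable, each
`wⱼ` is `m`-measurable and hence orthogonal to every `uᵢ`; as `X - η = u + w`, the Gram matrices
split and `A = B + G` with `G = c · gram(w)` positive semidefinite. Then
`B⁻¹ - A⁻¹ = A⁻¹ (G + G B⁻¹ G) A⁻¹ ⪰ 0`, with equality iff `G = 0`, i.e. iff `w = 0`.
-/

open MeasureTheory
open scoped Matrix InnerProductSpace ComplexOrder

namespace Matrix

section Inverse

variable {n R : Type*} [Fintype n] [DecidableEq n] [CommRing R]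

theorem inv_sub_inv_add_eq {B G : Matrix n n R} (hB : IsUnit B.det) (hBG : IsUnit (B + G).det) :
    B⁻¹ - (B + G)⁻¹ = (B + G)⁻¹ * (G + G * B⁻¹ * G) * (B + G)⁻¹ := by
  set A := B + G with hA
  calc B⁻¹ - A⁻¹ = A⁻¹ * (A - B) * B⁻¹ := by
        rw [mul_sub, sub_mul, nonsing_inv_mul A hBG, one_mul, mul_assoc, mul_nonsing_inv B hB,
          mul_one]
    _ = A⁻¹ * G * B⁻¹ * A * A⁻¹ := by
        rw [mul_assoc _ A, mul_nonsing_inv A hBG, mul_one, hA, add_sub_cancel_left]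
    _ = A⁻¹ * (G * (B⁻¹ * B) + G * B⁻¹ * G) * A⁻¹ := by
        rw [hA]; noncomm_ring
    _ = A⁻¹ * (G + G * B⁻¹ * G) * A⁻¹ := by
        rw [nonsing_inv_mul B hB, mul_one]

theorem inv_add_eq_inv_iff {B G : Matrix n n R} (hBG : IsUnit (B + G).det) :
    (B + G)⁻¹ = B⁻¹ ↔ G = 0 := by
  refine ⟨fun h ↦ ?_, fun h ↦ by rw [h, add_zero]⟩
  simpa using inv_inj h hBG

end Inverse

variable {n 𝕜 : Type*} [RCLike 𝕜]

theorem PosDef.posSemidef_inv_sub_inv_add [Fintype n] [DecidableEq n] {B G : Matrix n n 𝕜}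
    (hB : B.PosDef) (hG : G.PosSemidef) : (B⁻¹ - (B + G)⁻¹).PosSemidef := by
  have hBG := hB.add_posSemidef hG
  rw [inv_sub_inv_add_eq hB.det_pos.ne'.isUnit hBG.det_pos.ne'.isUnit]
  have hmid : (G + Gᴴ * B⁻¹ * G).PosSemidef :=
    hG.add (hB.inv.posSemidef.conjTranspose_mul_mul_same G)
  rw [hG.isHermitian.eq] at hmid
  simpa only [hBG.inv.isHermitian.eq] using hmid.conjTranspose_mul_mul_same (B + G)⁻¹

variable {E : Type*} [NormedAddCommGroup E] [InnerProductSpace 𝕜 E]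

theorem gram_eq_zero_iff {v : n → E} : gram 𝕜 v = 0 ↔ v = 0 := by
  refine ⟨fun h ↦ funext fun i ↦ ?_, fun h ↦ h ▸ gram_zero⟩
  simpa using congr_fun₂ h i i

theorem gram_add_of_inner_eq_zero {u w : n → E} (h : ∀ i j, ⟪u i, w j⟫_𝕜 = 0) :
    gram 𝕜 (u + w) = gram 𝕜 u + gram 𝕜 w := by
  ext i j
  simp [inner_add_left, inner_add_right, h, inner_eq_zero_symm.mp (h j i)]

end Matrix

namespace MeasureTheory

variable {Ω : Type*} {m m₀ : MeasurableSpace Ω} {μ : Measure Ω}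

theorem inner_sub_condExpL2_eq_zero (hm : m ≤ m₀) (f g : Lp ℝ 2 μ)
    (hg : AEStronglyMeasurable[m] g μ) :
    ⟪f - (condExpL2 ℝ ℝ hm f : Lp ℝ 2 μ), g⟫_ℝ = 0 := by
  rw [inner_sub_left, inner_condExpL2_eq_inner_fun hm f g hg, sub_self]

theorem L2.integral_mul_eq_inner (f g : Lp ℝ 2 μ) : ∫ ω, f ω * g ω ∂μ = ⟪f, g⟫_ℝ := by
  simp [L2.inner_def, mul_comm]

theorem L2.of_integral_sub_mul_sub_eq_smul_gram {ι : Type*} (c : ℝ) (X Y : ι → Lp ℝ 2 μ) :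
    Matrix.of (fun i j ↦ c * ∫ ω, (X i ω - Y i ω) * (X j ω - Y j ω) ∂μ)
      = c • Matrix.gram ℝ (X - Y) := by
  ext i j
  rw [Matrix.of_apply, Matrix.smul_apply, Matrix.gram_apply, ← L2.integral_mul_eq_inner,
    smul_eq_mul]
  congr 1
  refine integral_congr_ae ?_
  filter_upwards [Lp.coeFn_sub (X i) (Y i), Lp.coeFn_sub (X j) (Y j)] with ω hi hj
  rw [Pi.sub_apply, Pi.sub_apply, hi, hj, Pi.sub_apply, Pi.sub_apply]

end MeasureTheory

theorem stmt7_general {Ω : Type*} {F : MeasurableSpace Ω} (μ : Measure Ω)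
    {p : ℕ}
    (m : MeasurableSpace Ω) (hm : m ≤ F)
    (H : Submodule ℝ (Lp ℝ 2 μ)) [CompleteSpace H]
    (hHmeas : ∀ f : Lp ℝ 2 μ, f ∈ H → AEStronglyMeasurable[m] (f : Ω → ℝ) μ)
    (X : Fin p → Lp ℝ 2 μ)
    (ce : Fin p → Lp ℝ 2 μ) (hce : ∀ i, ce i = (condExpL2 ℝ ℝ hm (X i) : Lp ℝ 2 μ))
    (η : Fin p → Lp ℝ 2 μ)
    (hη : ∀ i, η i = (H.orthogonalProjectionOnto (ce i) : Lp ℝ 2 μ))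
    (c : ℝ) (hc : 0 < c)
    (A B : Matrix (Fin p) (Fin p) ℝ)
    (hA : A = Matrix.of fun i j : Fin p =>
      c * ∫ ω, ((X i : Ω → ℝ) ω - (η i : Ω → ℝ) ω)
            * ((X j : Ω → ℝ) ω - (η j : Ω → ℝ) ω) ∂μ)
    (hB : B = Matrix.of fun i j : Fin p =>
      c * ∫ ω, ((X i : Ω → ℝ) ω - (ce i : Ω → ℝ) ω)
            * ((X j : Ω → ℝ) ω - (ce j : Ω → ℝ) ω) ∂μ)
    (hBpos : B.PosDef) :
    A.PosDef ∧ (B⁻¹ - A⁻¹).PosSemidef ∧ (A⁻¹ = B⁻¹ ↔ ∀ i, η i = ce i) := by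
  have hmeas : ∀ j, AEStronglyMeasurable[m] ((ce - η) j : Ω → ℝ) μ := fun j ↦
    have hce_meas : AEStronglyMeasurable[m] (ce j : Ω → ℝ) μ :=
      hce j ▸ lpMeas.aestronglyMeasurable _
    have hη_meas := hHmeas _ (hη j ▸ Submodule.coe_mem _)
    (hce_meas.sub hη_meas).congr (Lp.coeFn_sub (ce j) (η j)).symm
  have horth : ∀ i j, ⟪(X - ce) i, (ce - η) j⟫_ℝ = 0 := fun i j ↦ by
    rw [Pi.sub_apply, hce i]
    exact inner_sub_condExpL2_eq_zero hm _ _ (hmeas j)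
  have hB' : B = c • Matrix.gram ℝ (X - ce) :=
    hB.trans (L2.of_integral_sub_mul_sub_eq_smul_gram c X ce)
  have hA' : A = B + c • Matrix.gram ℝ (ce - η) := by
    rw [hA, L2.of_integral_sub_mul_sub_eq_smul_gram, ← sub_add_sub_cancel X ce η,
      Matrix.gram_add_of_inner_eq_zero horth, smul_add, hB']
  have hG : (c • Matrix.gram ℝ (ce - η)).PosSemidef := (Matrix.posSemidef_gram ℝ _).smul hc.le
  have hApos : A.PosDef := hA' ▸ hBpos.add_posSemidef hG
  refine ⟨hApos, hA' ▸ hBpos.posSemidef_inv_sub_inv_add hG, ?_⟩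
  rw [hA', Matrix.inv_add_eq_inv_iff (hA' ▸ hApos.det_pos.ne'.isUnit),
    smul_eq_zero_iff_right hc.ne', Matrix.gram_eq_zero_iff, sub_eq_zero, funext_iff]
  simp only [eq_comm]

/-- Theorem 2 of the paper: with `A_{ij} = c·∫(Xᵢ−ηᵢ)(Xⱼ−ηⱼ)dμ` (information bound in the
partially linear additive model) and `B_{ij} = c·∫(Xᵢ−E[Xᵢ|m])(Xⱼ−E[Xⱼ|m])dμ` (partially
linear model), if `B` is positive definite then `A` is positive definite, `B⁻¹ − A⁻¹` is
positive semidefinite, and `A⁻¹ = B⁻¹` iff `ηᵢ = E[Xᵢ|m]` in `L²(μ)` for every `i`. -/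
theorem stmt7 {Ω : Type*} {F : MeasurableSpace Ω} (μ : Measure Ω) [IsProbabilityMeasure μ]
    {p : ℕ}
    (m : MeasurableSpace Ω) (hm : m ≤ F)
    (H : Submodule ℝ (Lp ℝ 2 μ)) (hH : IsClosed (H : Set (Lp ℝ 2 μ))) [CompleteSpace H]
    (hHmeas : ∀ f : Lp ℝ 2 μ, f ∈ H → AEStronglyMeasurable[m] (f : Ω → ℝ) μ)
    (X : Fin p → Lp ℝ 2 μ)
    (ce : Fin p → Lp ℝ 2 μ) (hce : ∀ i, ce i = (condExpL2 ℝ ℝ hm (X i) : Lp ℝ 2 μ))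
    (η : Fin p → Lp ℝ 2 μ)
    (hη : ∀ i, η i = (H.orthogonalProjectionOnto (ce i) : Lp ℝ 2 μ))
    (c : ℝ) (hc : 0 < c)
    (A B : Matrix (Fin p) (Fin p) ℝ)
    (hA : A = Matrix.of fun i j : Fin p =>
      c * ∫ ω, ((X i : Ω → ℝ) ω - (η i : Ω → ℝ) ω)
            * ((X j : Ω → ℝ) ω - (η j : Ω → ℝ) ω) ∂μ)
    (hB : B = Matrix.of fun i j : Fin p =>
      c * ∫ ω, ((X i : Ω → ℝ) ω - (ce i : Ω → ℝ) ω)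
            * ((X j : Ω → ℝ) ω - (ce j : Ω → ℝ) ω) ∂μ)
    (hBpos : B.PosDef) :
    A.PosDef ∧ (B⁻¹ - A⁻¹).PosSemidef ∧ (A⁻¹ = B⁻¹ ↔ ∀ i, η i = ce i) :=
  stmt7_general μ m hm H hHmeas X ce hce η hη c hc A B hA hB hBpos
end

section
/- Let g : ℝ → [0, ∞) be a measurable probability density (∫ g(x) dx = 1) with ∫ |x|^r g(x) dx < ∞ for some r > 2, and let M > 0. Then there exist constants δ ∈ (0, 1) and C₁ > 0 such that for every η ∈ (0, 1] there is a finite set S of measurable functions from ℝ to ℝ with cardinality at most exp(C₁ η^{−(2−δ)}) such that every f : ℝ → ℝ with sup_x |f(x)| ≤ M and |f(x) − f(y)| ≤ M|x − y| for all x, y (i.e., Lipschitz with constant M) admits s ∈ S with ∫ (f(x) − s(x))² g(x) dx ≤ η². -/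
/-!
Truncate at `T ≍ η^(-2/r)`: by Markov's inequality for the `r`-th moment `A`, the region
`|x| ≥ T` contributes at most `M² A / T^r ≤ η²/2` to `∫ (f - s)² g` when `s` vanishes there.
On `(-T, T)`, cut into `N ≍ η^(-(1 + 2/r))` cells of width `η/(4M)` and round the value of `f`
at the left end of each cell to a grid of mesh `η/4` in `[-M, M]`, with `K ≍ η⁻¹` levels; by
the Lipschitz bound the resulting step function is within `η/2` of `f` there. At most `K^N`
step functions arise, and `log K ≤ K^δ/δ` turns `N log K` into `O(η^(-(1 + 2/r + δ)))`, which
is `O(η^(-(2 - δ)))` for `δ = (1 - 2/r)/2`.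
-/

open MeasureTheory Set Real

lemma mem_Ico_mul_natFloor_div {y w : ℝ} (hy : 0 ≤ y) (hw : 0 < w) :
    y ∈ Ico (w * ⌊y / w⌋₊) (w * ⌊y / w⌋₊ + w) := by
  have hle := Nat.floor_le (div_nonneg hy hw.le)
  have hlt := Nat.lt_floor_add_one (y / w)
  rw [le_div_iff₀ hw] at hle
  rw [div_lt_iff₀ hw] at hlt
  constructor <;> linarith

lemma abs_sub_quantize_le {t M e : ℝ} (he : 0 < e) (ht : |t| ≤ M) :
    |t - (-M + e * ⌊(t + M) / e⌋₊)| ≤ e := by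
  have hcell := mem_Ico_mul_natFloor_div (by linarith [neg_abs_le t]) he (y := t + M)
  rw [abs_le]
  constructor <;> linarith [hcell.1, hcell.2]

lemma natFloor_quantize_lt {t M e : ℝ} {K : ℕ} (he : 0 < e) (ht : |t| ≤ M)
    (hK : 2 * M < K * e) : ⌊(t + M) / e⌋₊ < K := by
  rw [Nat.floor_lt (div_nonneg (by linarith [neg_abs_le t]) he.le), div_lt_iff₀ he]
  linarith [le_abs_self t]

noncomputable def windowStep (T w : ℝ) (v : ℕ → ℝ) (x : ℝ) : ℝ :=
  if |x| < T then v ⌊(x + T) / w⌋₊ else 0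

lemma measurable_windowStep (T w : ℝ) (v : ℕ → ℝ) : Measurable (windowStep T w v) :=
  Measurable.ite (measurableSet_lt measurable_abs measurable_const)
    (measurable_from_nat.comp (Nat.measurable_floor.comp
      ((measurable_id.add_const T).div_const w))) measurable_const

lemma windowStep_of_le_abs {T w x : ℝ} (v : ℕ → ℝ) (hx : T ≤ |x|) : windowStep T w v x = 0 :=
  if_neg hx.not_gt

lemma abs_sub_windowStep_le {f : ℝ → ℝ} {v : ℕ → ℝ} {M T w e x : ℝ} {N : ℕ} (hw : 0 < w)
    (hN : 2 * T ≤ N * w) (hf : ∀ x y, |f x - f y| ≤ M * |x - y|)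
    (hv : ∀ m < N, |f (-T + w * m) - v m| ≤ e) (hx : |x| < T) :
    |f x - windowStep T w v x| ≤ M * w + e := by
  have hM : 0 ≤ M := by simpa using (abs_nonneg _).trans (hf 1 0)
  obtain ⟨hxl, hxr⟩ := abs_lt.mp hx
  have hcell := mem_Ico_mul_natFloor_div (y := x + T) (by linarith) hw
  set m := ⌊(x + T) / w⌋₊
  have hm : m < N := by
    have : w * m < w * N := by linarith [hcell.1]
    exact_mod_cast lt_of_mul_lt_mul_left this hw.le
  have hstep : |x - (-T + w * m)| ≤ w := by
    rw [abs_le]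
    constructor <;> linarith [hcell.1, hcell.2]
  rw [windowStep, if_pos hx]
  calc |f x - v m| ≤ |f x - f (-T + w * m)| + |f (-T + w * m) - v m| := abs_sub_le _ _ _
    _ ≤ M * w + e := add_le_add ((hf _ _).trans (mul_le_mul_of_nonneg_left hstep hM)) (hv m hm)

theorem exists_finset_window_net {M T w e : ℝ} {N K : ℕ} (hw : 0 < w) (he : 0 < e)
    (hN : 2 * T ≤ N * w) (hK : 2 * M < K * e) :
    ∃ S : Finset (ℝ → ℝ), (∀ s ∈ S, Measurable s) ∧ S.card ≤ K ^ N ∧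
      ∀ f : ℝ → ℝ, (∀ x, |f x| ≤ M) → (∀ x y, |f x - f y| ≤ M * |x - y|) →
        ∃ s ∈ S, (∀ x, |x| < T → |f x - s x| ≤ M * w + e) ∧ ∀ x, T ≤ |x| → s x = 0 := by
  classical
  -- codes are extended by `0` beyond `N`; on `(-T, T)` only the cells `m < N` are read
  let step (c : Fin N → Fin K) : ℝ → ℝ :=
    windowStep T w fun m => -M + e * Function.extend Fin.val (fun i => (c i : ℕ)) 0 m
  refine ⟨Finset.univ.image step, ?_, Finset.card_image_le.trans (by simp), fun f hfb hfl => ?_⟩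
  · simp only [Finset.mem_image]
    rintro _ ⟨c, -, rfl⟩
    exact measurable_windowStep _ _ _
  let c (i : Fin N) : Fin K := ⟨_, natFloor_quantize_lt he (hfb (-T + w * i)) hK⟩
  refine ⟨step c, Finset.mem_image_of_mem _ (Finset.mem_univ c),
    fun x hx => abs_sub_windowStep_le hw hN hfl (fun m hm => ?_) hx,
    fun x hx => windowStep_of_le_abs _ hx⟩
  rw [show m = (⟨m, hm⟩ : Fin N).val from rfl, Fin.val_injective.extend_apply]
  exact abs_sub_quantize_le he (hfb _)

lemma integral_sq_mul_le_of_abs_le {g h : ℝ → ℝ} {ε M T r : ℝ} (hg0 : ∀ x, 0 ≤ g x)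
    (hgint : Integrable g) (hmom : Integrable fun x => |x| ^ r * g x) (hT : 0 < T) (hr : 0 ≤ r)
    (hin : ∀ x, |x| < T → |h x| ≤ ε) (hout : ∀ x, T ≤ |x| → |h x| ≤ M) :
    ∫ x, h x ^ 2 * g x ≤ ε ^ 2 * (∫ x, g x) + M ^ 2 / T ^ r * ∫ x, |x| ^ r * g x := by
  have hsq : ∀ x, h x ^ 2 ≤ ε ^ 2 + M ^ 2 / T ^ r * |x| ^ r := by
    intro x
    rw [← sq_abs]
    rcases lt_or_ge |x| T with hx | hx
    · have : 0 ≤ M ^ 2 / T ^ r * |x| ^ r := by positivity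
      nlinarith [pow_le_pow_left₀ (abs_nonneg _) (hin x hx) 2]
    · calc |h x| ^ 2 ≤ M ^ 2 := pow_le_pow_left₀ (abs_nonneg _) (hout x hx) 2
        _ = M ^ 2 / T ^ r * T ^ r := by field_simp
        _ ≤ M ^ 2 / T ^ r * |x| ^ r := by gcongr
        _ ≤ ε ^ 2 + M ^ 2 / T ^ r * |x| ^ r := le_add_of_nonneg_left (sq_nonneg ε)
  have hint := (hgint.const_mul (ε ^ 2)).add (hmom.const_mul (M ^ 2 / T ^ r))
  calc ∫ x, h x ^ 2 * g x ≤ ∫ x, (ε ^ 2 * g x + M ^ 2 / T ^ r * (|x| ^ r * g x)) :=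
        integral_mono_of_nonneg (ae_of_all _ fun x => mul_nonneg (sq_nonneg _) (hg0 x)) hint
          (ae_of_all _ fun x => by nlinarith [hsq x, hg0 x])
    _ = _ := by
        rw [integral_add (hgint.const_mul _) (hmom.const_mul _), integral_const_mul,
          integral_const_mul]

lemma natCeil_mul_le_add_one_mul {a y : ℝ} (ha : 0 ≤ a) (hy : 1 ≤ y) :
    (⌈a * y⌉₊ : ℝ) ≤ (a + 1) * y := by
  have := Nat.ceil_lt_add_one (by positivity : 0 ≤ a * y)
  linarith

lemma pow_le_exp_mul_rpow_div {K N : ℕ} {a b δ : ℝ} (hK : 0 < K) (hδ : 0 < δ)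
    (hN : (N : ℝ) ≤ a) (hKb : (K : ℝ) ≤ b) : (K : ℝ) ^ N ≤ exp (a * b ^ δ / δ) := by
  have hK1 : (1 : ℝ) ≤ K := by exact_mod_cast hK
  have hlog : log K ≤ b ^ δ / δ :=
    (log_le_rpow_div (by positivity) hδ).trans (by gcongr)
  calc (K : ℝ) ^ N = exp (N * log K) := by rw [exp_nat_mul, exp_log (by positivity)]
    _ ≤ exp (a * (b ^ δ / δ)) :=
        exp_le_exp.2 (mul_le_mul hN hlog (log_nonneg hK1) ((Nat.cast_nonneg N).trans hN))
    _ = exp (a * b ^ δ / δ) := by rw [mul_div_assoc]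

lemma natCeil_pow_natCeil_le_exp {a b p δ ρ : ℝ} (ha : 0 ≤ a) (hb : 0 ≤ b) (hp : 0 ≤ p)
    (hδ : 0 < δ) (hρ : 1 ≤ ρ) :
    (⌈(b + 1) * ρ⌉₊ : ℝ) ^ ⌈a * ρ ^ p⌉₊ ≤ exp ((a + 1) * (b + 2) ^ δ / δ * ρ ^ (p + δ)) := by
  calc (⌈(b + 1) * ρ⌉₊ : ℝ) ^ ⌈a * ρ ^ p⌉₊ ≤ exp ((a + 1) * ρ ^ p * ((b + 2) * ρ) ^ δ / δ) :=
        pow_le_exp_mul_rpow_div (Nat.ceil_pos.2 (by positivity)) hδ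
          (natCeil_mul_le_add_one_mul ha (one_le_rpow hρ hp))
          ((natCeil_mul_le_add_one_mul (by positivity) hρ).trans (by linarith))
    _ = exp ((a + 1) * (b + 2) ^ δ / δ * ρ ^ (p + δ)) := by
        rw [mul_rpow (by positivity) (by positivity), rpow_add (by positivity)]
        ring_nf

theorem stmt15_general (g : ℝ → ℝ) (hg0 : ∀ x, 0 ≤ g x)
    (hgint : Integrable g) (hgone : (∫ x, g x) = 1)
    (r : ℝ) (hr : 2 < r) (hmom : Integrable (fun x => |x| ^ r * g x))
    (M : ℝ) (hM : 0 < M) :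
    ∃ δ : ℝ, δ ∈ Set.Ioo (0 : ℝ) 1 ∧ ∃ C₁ : ℝ, 0 < C₁ ∧
      ∀ η : ℝ, 0 < η → η ≤ 1 →
        ∃ S : Finset (ℝ → ℝ),
          (∀ s ∈ S, Measurable s) ∧
          (S.card : ℝ) ≤ Real.exp (C₁ * η ^ (-(2 - δ))) ∧
          ∀ f : ℝ → ℝ,
            (∀ x, |f x| ≤ M) → (∀ x y : ℝ, |f x - f y| ≤ M * |x - y|) →
            ∃ s ∈ S, (∫ x, (f x - s x) ^ 2 * g x) ≤ η ^ 2 := by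
  set A := ∫ x, |x| ^ r * g x
  have hA : 0 ≤ A := integral_nonneg fun x => mul_nonneg (by positivity) (hg0 x)
  have hr0 : 0 < r := by linarith
  have h2r : 2 / r < 1 := (div_lt_one hr0).2 hr
  set B := (2 * M ^ 2 * (A + 1)) ^ r⁻¹
  set δ := (1 - 2 / r) / 2 with hδdef
  have hδ : δ ∈ Ioo 0 1 := ⟨by linarith, by linarith [div_pos two_pos hr0]⟩
  refine ⟨δ, hδ, (8 * M * B + 1) * (8 * M + 2) ^ δ / δ, by have := hδ.1; positivity,
    fun η hη hη1 => ?_⟩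
  have hη' : 1 ≤ η⁻¹ := one_le_inv_iff₀.2 ⟨hη, hη1⟩
  set T := B * η⁻¹ ^ (2 / r) with hTdef
  have hTr : T ^ r = 2 * M ^ 2 * (A + 1) * η⁻¹ ^ 2 := by
    rw [mul_rpow (by positivity) (by positivity), rpow_inv_rpow (by positivity) hr0.ne',
      ← rpow_mul (by positivity), div_mul_cancel₀ _ hr0.ne', rpow_two]
  have hN : 2 * T ≤ ⌈8 * M * B * η⁻¹ ^ (1 + 2 / r)⌉₊ * (η / (4 * M)) := by
    calc 2 * T = 8 * M * B * η⁻¹ ^ (1 + 2 / r) * (η / (4 * M)) := by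
          rw [hTdef, rpow_add (by positivity), rpow_one]; field_simp; ring
      _ ≤ _ := by gcongr; exact Nat.le_ceil _
  have hK : 2 * M < ⌈(8 * M + 1) * η⁻¹⌉₊ * (η / 4) := by
    calc 2 * M < (8 * M + 1) * η⁻¹ * (η / 4) := by
          field_simp; linarith
      _ ≤ _ := by gcongr; exact Nat.le_ceil _
  obtain ⟨S, hSmeas, hScard, hSnet⟩ := exists_finset_window_net (by positivity) (by positivity) hN hK
  refine ⟨S, hSmeas, ?_, fun f hfb hfl => ?_⟩
  · calc (S.card : ℝ) ≤ (⌈(8 * M + 1) * η⁻¹⌉₊ : ℝ) ^ ⌈8 * M * B * η⁻¹ ^ (1 + 2 / r)⌉₊ := by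
          exact_mod_cast hScard
      _ ≤ _ := natCeil_pow_natCeil_le_exp (by positivity) (by positivity) (by positivity) hδ.1 hη'
      _ = _ := by rw [rpow_neg hη.le, ← inv_rpow hη.le, show 2 - δ = 1 + 2 / r + δ by ring]
  · obtain ⟨s, hs, hin, hout⟩ := hSnet f hfb hfl
    refine ⟨s, hs, ?_⟩
    calc ∫ x, (f x - s x) ^ 2 * g x
        ≤ (M * (η / (4 * M)) + η / 4) ^ 2 * (∫ x, g x) + M ^ 2 / T ^ r * A :=
          integral_sq_mul_le_of_abs_le hg0 hgint hmom (by positivity) hr0.le hin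
            fun x hx => by simpa [hout x hx] using hfb x
      _ ≤ η ^ 2 := by
          rw [hgone, hTr]
          field_simp
          nlinarith

/-- Entropy bound of Lemma 1: for a probability density `g` with a finite moment of order
`r > 2`, the class of functions bounded by `M` and `M`-Lipschitz admits, for each
`η ∈ (0,1]`, an `η`-net in `L²(g)` of cardinality at most `exp(C₁ η^{−(2−δ)})` for some
constants `δ ∈ (0,1)` and `C₁ > 0`. -/
theorem stmt15 (g : ℝ → ℝ) (hg : Measurable g) (hg0 : ∀ x, 0 ≤ g x)
    (hgint : Integrable g) (hgone : (∫ x, g x) = 1)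
    (r : ℝ) (hr : 2 < r) (hmom : Integrable (fun x => |x| ^ r * g x))
    (M : ℝ) (hM : 0 < M) :
    ∃ δ : ℝ, δ ∈ Set.Ioo (0 : ℝ) 1 ∧ ∃ C₁ : ℝ, 0 < C₁ ∧
      ∀ η : ℝ, 0 < η → η ≤ 1 →
        ∃ S : Finset (ℝ → ℝ),
          (∀ s ∈ S, Measurable s) ∧
          (S.card : ℝ) ≤ Real.exp (C₁ * η ^ (-(2 - δ))) ∧
          ∀ f : ℝ → ℝ,
            (∀ x, |f x| ≤ M) → (∀ x y : ℝ, |f x - f y| ≤ M * |x - y|) →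
            ∃ s ∈ S, (∫ x, (f x - s x) ^ 2 * g x) ≤ η ^ 2 :=
  stmt15_general g hg0 hgint hgone r hr hmom M hM
end

section
/- Let μ be a probability measure on [0,1]^d whose density with respect to Lebesgue measure is bounded below by a constant c > 0, and let μ_j denote the j-th coordinate marginal of μ. Suppose m_j ∈ L¹(μ_j) for j = 1, …, d satisfy ∫ m_j dμ_j = 0 for each j, and Σ_{j=1}^d m_j(z_j) = 0 for μ-almost every z = (z₁, …, z_d) ∈ [0,1]^d. Then for each j, m_j = 0 μ_j-almost everywhere. -/
/-!
Under the uniform measure `P` on the cube the coordinates are independent, so integrating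
`∑ₖ mₖ (zₖ) = 0` against `1_s (z_j)` gives `∫_s m_j + (∑_{k ≠ j} ∫ mₖ) · P(z_j ∈ s) = 0`
for every measurable `s`: each `m_j` is a.e. constant. The lower bound on the density makes
`μ` and `P` mutually absolutely continuous and the `mₖ` integrable for the marginals of `P`,
and the centering forces the constant to vanish.
-/

open MeasureTheory ProbabilityTheory Finset

section Independence

variable {Ω ι : Type*} [MeasurableSpace Ω] {P : Measure Ω}

theorem ProbabilityTheory.IndepFun.integral_comp_mul_indicator_comp {β γ : Type*}
    [MeasurableSpace β] [MeasurableSpace γ] {X : Ω → β} {Y : Ω → γ} (hXY : IndepFun X Y P)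
    (hX : Measurable X) (hY : Measurable Y) {f : β → ℝ} (hf : Integrable f (P.map X))
    {s : Set γ} (hs : MeasurableSet s) :
    ∫ ω, f (X ω) * s.indicator 1 (Y ω) ∂P = (∫ x, f x ∂P.map X) * (P.map Y).real s := by
  have h1 : AEStronglyMeasurable (s.indicator (1 : γ → ℝ)) (P.map Y) :=
    aestronglyMeasurable_one.indicator hs
  rw [integral_map hX.aemeasurable hf.aestronglyMeasurable, ← integral_indicator_one hs,
    integral_map hY.aemeasurable h1]
  exact hXY.integral_comp_mul_comp hX.aemeasurable hY.aemeasurable hf.aestronglyMeasurable h1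

variable [IsProbabilityMeasure P] [Fintype ι] [DecidableEq ι] {β : ι → Type*}
  [∀ i, MeasurableSpace (β i)] {X : ∀ i, Ω → β i} {m : ∀ i, β i → ℝ}

theorem ae_eq_neg_sum_integral_of_sum_comp_ae_eq_zero (hX : ∀ i, Measurable (X i))
    (hm : ∀ i, Integrable (m i) (P.map (X i))) {j : ι}
    (hind : ∀ k ≠ j, IndepFun (X k) (X j) P) (hsum : ∀ᵐ ω ∂P, ∑ i, m i (X i ω) = 0) :
    m j =ᵐ[P.map (X j)] fun _ => -∑ k ∈ univ.erase j, ∫ x, m k x ∂P.map (X k) := by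
  set b := ∑ k ∈ univ.erase j, ∫ x, m k x ∂P.map (X k)
  suffices h : (fun x => m j x + b) =ᵐ[P.map (X j)] 0 by
    filter_upwards [h] with x hx
    rw [Pi.zero_apply] at hx
    linarith
  refine ((hm j).add (integrable_const b)).ae_eq_zero_of_forall_setIntegral_eq_zero
    fun s hs _ => ?_
  set g : β j → ℝ := s.indicator 1
  have hterm : ∀ i, Integrable (fun ω => m i (X i ω) * g (X j ω)) P := fun i =>
    ((hm i).comp_aemeasurable (hX i).aemeasurable).mul_bdd (c := 1)
      ((aestronglyMeasurable_one.indicator hs).comp_aemeasurable (hX j).aemeasurable)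
      (ae_of_all _ fun ω => by by_cases h : X j ω ∈ s <;> simp [g, h])
  have hdiag : ∫ ω, m j (X j ω) * g (X j ω) ∂P = ∫ x in s, m j x ∂P.map (X j) := by
    rw [← integral_indicator hs, integral_map (hX j).aemeasurable
      ((hm j).aestronglyMeasurable.indicator hs)]
    congr 1 with ω
    by_cases h : X j ω ∈ s <;> simp [g, h]
  have htested : ∫ ω, (∑ i, m i (X i ω)) * g (X j ω) ∂P = 0 := by
    rw [integral_congr_ae (g := 0) (by filter_upwards [hsum] with ω hω; simp [hω])]
    exact integral_zero _ _
  simp_rw [sum_mul] at htested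
  rw [integral_finsetSum _ fun i _ => hterm i, ← add_sum_erase _ _ (mem_univ j), hdiag,
    sum_congr rfl fun k hk => (hind k (ne_of_mem_erase hk)).integral_comp_mul_indicator_comp
      (hX k) (hX j) (hm k) hs, ← sum_mul] at htested
  change ∫ x in s, (m j x + b) ∂P.map (X j) = 0
  rw [integral_add (hm j).integrableOn (integrable_const b), setIntegral_const, smul_eq_mul,
    mul_comm]
  exact htested

end Independence

theorem MeasureTheory.Measure.smul_le_withDensity {α : Type*} [MeasurableSpace α]
    {ν : Measure α} {ρ : α → ENNReal} {a : ENNReal} (h : ∀ᵐ x ∂ν, a ≤ ρ x) :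
    a • ν ≤ ν.withDensity ρ :=
  withDensity_const (μ := ν) a ▸ withDensity_mono h

theorem MeasureTheory.Integrable.of_smul_le {α : Type*} [MeasurableSpace α] {μ ν : Measure α}
    {a : ENNReal} (ha : a ≠ 0) (ha' : a ≠ ⊤) (hle : a • ν ≤ μ) {f : α → ℝ}
    (hf : Integrable f μ) : Integrable f ν := by
  refine hf.of_measure_le_smul (ENNReal.inv_ne_top.2 ha) ?_
  calc ν = a⁻¹ • a • ν := by rw [smul_smul, ENNReal.inv_mul_cancel ha ha', one_smul]
    _ ≤ a⁻¹ • μ := by gcongr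

instance : IsProbabilityMeasure (volume.restrict (Set.Icc (0 : ℝ) 1)) :=
  ⟨by simp⟩

theorem stmt17_general (d : ℕ) (μ : Measure (Fin d → ℝ)) [IsProbabilityMeasure μ]
    (c : ℝ) (hc : 0 < c)
    (ρ : (Fin d → ℝ) → ENNReal)
    (hμ : μ = (volume.restrict
        (Set.univ.pi fun _ : Fin d => Set.Icc (0 : ℝ) 1)).withDensity ρ)
    (hlow : ∀ z ∈ (Set.univ.pi fun _ : Fin d => Set.Icc (0 : ℝ) 1),
        ENNReal.ofReal c ≤ ρ z)
    (m : Fin d → ℝ → ℝ)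
    (hint : ∀ j, Integrable (m j) (μ.map fun z => z j))
    (hcen : ∀ j, (∫ t, m j t ∂(μ.map fun z => z j)) = 0)
    (hzero : ∀ᵐ z ∂μ, (∑ j, m j (z j)) = 0) :
    ∀ j, m j =ᵐ[μ.map fun z => z j] 0 := by
  intro j
  set P : Measure (Fin d → ℝ) := Measure.pi fun _ => volume.restrict (Set.Icc (0 : ℝ) 1)
  have hcube : volume.restrict (Set.univ.pi fun _ : Fin d => Set.Icc (0 : ℝ) 1) = P := by
    rw [volume_pi, Measure.restrict_pi_pi]
  have hc' : ENNReal.ofReal c ≠ 0 := (ENNReal.ofReal_pos.2 hc).ne'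
  have hcP : ENNReal.ofReal c • P ≤ μ := hμ ▸ hcube ▸ Measure.smul_le_withDensity
    (ae_restrict_of_forall_mem (MeasurableSet.univ_pi fun _ => measurableSet_Icc) hlow)
  have hPμ : P ≪ μ :=
    (Measure.absolutelyContinuous_smul hc').trans (Measure.absolutelyContinuous_of_le hcP)
  have hμP : μ ≪ P := hμ ▸ hcube ▸ withDensity_absolutelyContinuous _ _
  have hintP : ∀ k, Integrable (m k) (P.map fun z => z k) := fun k =>
    (hint k).of_smul_le hc' ENNReal.ofReal_ne_top (by
      rw [← Measure.map_smul]
      exact Measure.map_mono hcP (measurable_pi_apply k))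
  have hconst : m j =ᵐ[μ.map fun z => z j]
      fun _ => -∑ k ∈ univ.erase j, ∫ x, m k x ∂P.map fun z => z k :=
    (hμP.map (measurable_pi_apply j)).ae_le <|
      ae_eq_neg_sum_integral_of_sum_comp_ae_eq_zero (P := P) (X := fun k z => z k) (j := j)
        measurable_pi_apply hintP
        (fun _ hk => (iIndepFun_pi (X := fun _ => id) fun _ => aemeasurable_id).indepFun hk)
        (hzero.filter_mono hPμ.ae_le)
  have hb : -∑ k ∈ univ.erase j, ∫ x, m k x ∂P.map (fun z => z k) = 0 := by
    have := Measure.isProbabilityMeasure_map (μ := μ) (measurable_pi_apply j).aemeasurable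
    simpa [integral_congr_ae hconst] using hcen j
  filter_upwards [hconst] with t ht
  rw [ht, hb, Pi.zero_apply]

/-- Identifiability of the additive components: if `μ` is a probability measure on
`[0,1]^d` with Lebesgue density bounded below by `c > 0`, the `mⱼ` are integrable with
`∫ mⱼ dμⱼ = 0`, and `Σⱼ mⱼ(zⱼ) = 0` for `μ`-a.e. `z`, then each `mⱼ = 0` `μⱼ`-a.e. -/
theorem stmt17 (d : ℕ) (μ : Measure (Fin d → ℝ)) [IsProbabilityMeasure μ]
    (c : ℝ) (hc : 0 < c)
    (ρ : (Fin d → ℝ) → ENNReal) (hρ : Measurable ρ)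
    (hμ : μ = (volume.restrict
        (Set.univ.pi fun _ : Fin d => Set.Icc (0 : ℝ) 1)).withDensity ρ)
    (hlow : ∀ z ∈ (Set.univ.pi fun _ : Fin d => Set.Icc (0 : ℝ) 1),
        ENNReal.ofReal c ≤ ρ z)
    (m : Fin d → ℝ → ℝ)
    (hint : ∀ j, Integrable (m j) (μ.map fun z => z j))
    (hcen : ∀ j, (∫ t, m j t ∂(μ.map fun z => z j)) = 0)
    (hzero : ∀ᵐ z ∂μ, (∑ j, m j (z j)) = 0) :
    ∀ j, m j =ᵐ[μ.map fun z => z j] 0 :=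
  stmt17_general d μ c hc ρ hμ hlow m hint hcen hzero
end
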